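/- arXiv:1711.09549 — 2 statements merged into one kernel-verified Lean document; each statement's English description precedes it below -/
import Mathlib

section
/- Let κ : ℝ × ℝ → ℝ be smooth and let F : ℝ × ℝ → Matrix (2×2, ℝ) be smooth with F(s,t) invertible for every (s,t). Let J = [[0,−1],[1,0]]. Suppose ∂_s F = κ·F·J and ∂_t F = −(∂_s² κ + κ³/2)·F·J hold everywhere. Then κ satisfies the modified Korteweg–de Vries (mKdV) equation ∂_t κ + ∂_s³ κ + (3/2)·κ²·∂_s κ = 0. -/
attribute [local instance] Matrix.normedAddCommGroup Matrix.normedSpace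

/-- Partial derivative in the first variable. -/
noncomputable def pderivFst {E : Type*} [NormedAddCommGroup E] [NormedSpace ℝ E]
    (f : ℝ × ℝ → E) (p : ℝ × ℝ) : E := deriv (fun x => f (x, p.2)) p.1

/-- Partial derivative in the second variable. -/
noncomputable def pderivSnd {E : Type*} [NormedAddCommGroup E] [NormedSpace ℝ E]
    (f : ℝ × ℝ → E) (p : ℝ × ℝ) : E := deriv (fun y => f (p.1, y)) p.2

section Aux

variable {E : Type*} [NormedAddCommGroup E] [NormedSpace ℝ E]

lemma aux_hasDerivAt_pderivFst {f : ℝ × ℝ → E} (hf : Differentiable ℝ f) (p : ℝ × ℝ) :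
    HasDerivAt (fun x => f (x, p.2)) (pderivFst f p) p.1 := by
  have h : DifferentiableAt ℝ (fun x => f (x, p.2)) p.1 :=
    (hf (p.1, p.2)).comp p.1 (differentiableAt_id.prodMk (differentiableAt_const _))
  exact h.hasDerivAt

lemma aux_hasDerivAt_pderivSnd {f : ℝ × ℝ → E} (hf : Differentiable ℝ f) (p : ℝ × ℝ) :
    HasDerivAt (fun y => f (p.1, y)) (pderivSnd f p) p.2 := by
  have h : DifferentiableAt ℝ (fun y => f (p.1, y)) p.2 :=
    (hf (p.1, p.2)).comp p.2 ((differentiableAt_const _).prodMk differentiableAt_id)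
  exact h.hasDerivAt

lemma aux_pderivFst_eq_fderiv {f : ℝ × ℝ → E} (hf : Differentiable ℝ f) (p : ℝ × ℝ) :
    pderivFst f p = fderiv ℝ f p (1, 0) := by
  have h : HasDerivAt (fun x => f (x, p.2)) (fderiv ℝ f p (1, 0)) p.1 :=
    (hf (p.1, p.2)).hasFDerivAt.comp_hasDerivAt p.1
      ((hasDerivAt_id p.1).prodMk (hasDerivAt_const p.1 p.2))
  exact h.deriv

lemma aux_pderivSnd_eq_fderiv {f : ℝ × ℝ → E} (hf : Differentiable ℝ f) (p : ℝ × ℝ) :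
    pderivSnd f p = fderiv ℝ f p (0, 1) := by
  have h : HasDerivAt (fun y => f (p.1, y)) (fderiv ℝ f p (0, 1)) p.2 :=
    (hf (p.1, p.2)).hasFDerivAt.comp_hasDerivAt p.2
      ((hasDerivAt_const p.2 p.1).prodMk (hasDerivAt_id p.2))
  exact h.deriv

lemma aux_contDiff_pderivFst {f : ℝ × ℝ → E} (hf : ContDiff ℝ (⊤ : ℕ∞) f) :
    ContDiff ℝ (⊤ : ℕ∞) (pderivFst f) := by
  have h1 : ContDiff ℝ (⊤ : ℕ∞) (fderiv ℝ f) := hf.fderiv_right (by simp)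
  have h2 : ContDiff ℝ (⊤ : ℕ∞) (fun q => fderiv ℝ f q (1, 0)) := h1.clm_apply contDiff_const
  have h3 : pderivFst f = fun q => fderiv ℝ f q (1, 0) :=
    funext fun q => aux_pderivFst_eq_fderiv (hf.differentiable (by simp)) q
  rw [h3]; exact h2

lemma aux_contDiff_pderivSnd {f : ℝ × ℝ → E} (hf : ContDiff ℝ (⊤ : ℕ∞) f) :
    ContDiff ℝ (⊤ : ℕ∞) (pderivSnd f) := by
  have h1 : ContDiff ℝ (⊤ : ℕ∞) (fderiv ℝ f) := hf.fderiv_right (by simp)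
  have h2 : ContDiff ℝ (⊤ : ℕ∞) (fun q => fderiv ℝ f q (0, 1)) := h1.clm_apply contDiff_const
  have h3 : pderivSnd f = fun q => fderiv ℝ f q (0, 1) :=
    funext fun q => aux_pderivSnd_eq_fderiv (hf.differentiable (by simp)) q
  rw [h3]; exact h2

lemma aux_fderiv_apply_const {f : ℝ × ℝ → E} (hf : ContDiff ℝ (⊤ : ℕ∞) f) (p : ℝ × ℝ)
    (v w : ℝ × ℝ) :
    fderiv ℝ (fun q => fderiv ℝ f q v) p w = fderiv ℝ (fderiv ℝ f) p w v := by
  have hGd : Differentiable ℝ (fderiv ℝ f) :=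
    (hf.fderiv_right (m := (⊤ : ℕ∞)) (by simp)).differentiable (by simp)
  have h : HasFDerivAt (fun q => fderiv ℝ f q v)
      ((ContinuousLinearMap.apply ℝ E v).comp (fderiv ℝ (fderiv ℝ f) p)) p :=
    (ContinuousLinearMap.apply ℝ E v).hasFDerivAt.comp p (hGd p).hasFDerivAt
  rw [h.fderiv]; rfl

lemma aux_pderiv_comm {f : ℝ × ℝ → E} (hf : ContDiff ℝ (⊤ : ℕ∞) f) (p : ℝ × ℝ) :
    pderivSnd (pderivFst f) p = pderivFst (pderivSnd f) p := by
  have hdf : Differentiable ℝ f := hf.differentiable (by simp)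
  have hG : ContDiff ℝ (⊤ : ℕ∞) (fderiv ℝ f) := hf.fderiv_right (by simp)
  have hGd : Differentiable ℝ (fderiv ℝ f) := hG.differentiable (by simp)
  have hsymm := second_derivative_symmetric (f' := fderiv ℝ f)
    (fun y => (hdf y).hasFDerivAt) (hGd p).hasFDerivAt
  have e1 : pderivFst f = fun q => fderiv ℝ f q (1, 0) :=
    funext fun q => aux_pderivFst_eq_fderiv hdf q
  have e2 : pderivSnd f = fun q => fderiv ℝ f q (0, 1) :=
    funext fun q => aux_pderivSnd_eq_fderiv hdf q
  have d1 : Differentiable ℝ (fun q => fderiv ℝ f q (1, 0)) :=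
    (hG.clm_apply contDiff_const).differentiable (by simp)
  have d2 : Differentiable ℝ (fun q => fderiv ℝ f q (0, 1)) :=
    (hG.clm_apply contDiff_const).differentiable (by simp)
  calc pderivSnd (pderivFst f) p
      = fderiv ℝ (fun q => fderiv ℝ f q (1, 0)) p (0, 1) := by
        rw [e1]; exact aux_pderivSnd_eq_fderiv d1 p
    _ = fderiv ℝ (fderiv ℝ f) p (0, 1) (1, 0) := aux_fderiv_apply_const hf p _ _
    _ = fderiv ℝ (fderiv ℝ f) p (1, 0) (0, 1) := hsymm _ _
    _ = fderiv ℝ (fun q => fderiv ℝ f q (0, 1)) p (1, 0) :=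
        (aux_fderiv_apply_const hf p _ _).symm
    _ = pderivFst (pderivSnd f) p := by
        rw [e2]; exact (aux_pderivFst_eq_fderiv d2 p).symm

end Aux

/-- the compatibility condition of the Lax pair
`∂_s F = κ F J`, `∂_t F = -(κ_ss + κ³/2) F J` for an invertible frame `F` is the
mKdV equation `κ_t + κ_sss + (3/2) κ² κ_s = 0`. -/
theorem mkdv_from_lax_pair (κ : ℝ × ℝ → ℝ)
    (F : ℝ × ℝ → Matrix (Fin 2) (Fin 2) ℝ)
    (J : Matrix (Fin 2) (Fin 2) ℝ) (hJ : J = !![0, -1; 1, 0])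
    (hκ : ContDiff ℝ (⊤ : ℕ∞) κ) (hF : ContDiff ℝ (⊤ : ℕ∞) F)
    (hFinv : ∀ p : ℝ × ℝ, IsUnit (F p))
    (hs : ∀ p : ℝ × ℝ, pderivFst F p = κ p • (F p * J))
    (ht : ∀ p : ℝ × ℝ,
      pderivSnd F p = -(pderivFst (pderivFst κ) p + κ p ^ 3 / 2) • (F p * J)) :
    ∀ p : ℝ × ℝ,
      pderivSnd κ p + pderivFst (pderivFst (pderivFst κ)) p
        + 3 / 2 * κ p ^ 2 * pderivFst κ p = 0 := by
  intro p
  set lam : ℝ × ℝ → ℝ := fun q => pderivFst (pderivFst κ) q + κ q ^ 3 / 2 with hlam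
  have hκd : Differentiable ℝ κ := hκ.differentiable (by simp)
  have hFd : Differentiable ℝ F := hF.differentiable (by simp)
  have hκsC : ContDiff ℝ (⊤ : ℕ∞) (pderivFst κ) := aux_contDiff_pderivFst hκ
  have hκssC : ContDiff ℝ (⊤ : ℕ∞) (pderivFst (pderivFst κ)) := aux_contDiff_pderivFst hκsC
  have hlamC : ContDiff ℝ (⊤ : ℕ∞) lam := hκssC.add ((hκ.pow 3).div_const 2)
  -- line derivatives
  have hκx : HasDerivAt (fun x => κ (x, p.2)) (pderivFst κ p) p.1 :=
    aux_hasDerivAt_pderivFst hκd p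
  have hκy : HasDerivAt (fun y => κ (p.1, y)) (pderivSnd κ p) p.2 :=
    aux_hasDerivAt_pderivSnd hκd p
  have hFx : HasDerivAt (fun x => F (x, p.2)) (pderivFst F p) p.1 :=
    aux_hasDerivAt_pderivFst hFd p
  have hFy : HasDerivAt (fun y => F (p.1, y)) (pderivSnd F p) p.2 :=
    aux_hasDerivAt_pderivSnd hFd p
  have hlamx : HasDerivAt (fun x => lam (x, p.2)) (pderivFst lam p) p.1 :=
    aux_hasDerivAt_pderivFst (hlamC.differentiable (by simp)) p
  have hκssx : HasDerivAt (fun x => pderivFst (pderivFst κ) (x, p.2))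
      (pderivFst (pderivFst (pderivFst κ)) p) p.1 :=
    aux_hasDerivAt_pderivFst (hκssC.differentiable (by simp)) p
  -- right multiplication by J as a continuous linear map
  let A : Matrix (Fin 2) (Fin 2) ℝ →L[ℝ] Matrix (Fin 2) (Fin 2) ℝ :=
    LinearMap.toContinuousLinearMap (LinearMap.mulRight ℝ J)
  have hA : ∀ X, A X = X * J := fun X => rfl
  have hFJy : HasDerivAt (fun y => F (p.1, y) * J) (pderivSnd F p * J) p.2 := by
    have h := A.hasFDerivAt.comp_hasDerivAt p.2 hFy
    exact h
  have hFJx : HasDerivAt (fun x => F (x, p.2) * J) (pderivFst F p * J) p.1 := by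
    have h := A.hasFDerivAt.comp_hasDerivAt p.1 hFx
    exact h
  -- mixed partials
  have h1 : pderivSnd (pderivFst F) p
      = κ p • (pderivSnd F p * J) + pderivSnd κ p • (F p * J) := by
    have h := hκy.smul hFJy
    have heq : (fun y => pderivFst F (p.1, y))
        = fun y => κ (p.1, y) • (F (p.1, y) * J) := funext fun y => hs (p.1, y)
    unfold pderivSnd
    rw [heq]
    exact h.deriv
  have h2 : pderivFst (pderivSnd F) p
      = (-(lam p)) • (pderivFst F p * J) + (-(pderivFst lam p)) • (F p * J) := by
    have h := (hlamx.neg).smul hFJx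
    have heq : (fun x => pderivSnd F (x, p.2))
        = fun x => (-(lam (x, p.2))) • (F (x, p.2) * J) := funext fun x => ht (x, p.2)
    unfold pderivFst
    rw [heq]
    exact h.deriv
  have h3 : pderivSnd (pderivFst F) p = pderivFst (pderivSnd F) p :=
    aux_pderiv_comm hF p
  -- the key scalar equation
  have key : (pderivSnd κ p + pderivFst lam p) • (F p * J) = 0 := by
    have hE : κ p • (pderivSnd F p * J) + pderivSnd κ p • (F p * J)
        = (-(lam p)) • (pderivFst F p * J) + (-(pderivFst lam p)) • (F p * J) :=
      h1.symm.trans (h3.trans h2)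
    rw [ht p, hs p, smul_mul_assoc, smul_mul_assoc, smul_smul, smul_smul] at hE
    rw [show κ p * -(pderivFst (pderivFst κ) p + κ p ^ 3 / 2)
        = -(lam p) * κ p by rw [hlam]; ring] at hE
    have := add_left_cancel hE
    rw [add_smul, this, neg_smul, neg_add_cancel]
  -- F p * J is nonzero
  have hJu : IsUnit J := by
    rw [Matrix.isUnit_iff_isUnit_det, hJ, Matrix.det_fin_two_of]
    norm_num
  have hFJne : F p * J ≠ 0 := ((hFinv p).mul hJu).ne_zero
  rcases smul_eq_zero.mp key with h | h
  · -- compute pderivFst lam p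
    have hlamval : pderivFst lam p
        = pderivFst (pderivFst (pderivFst κ)) p + 3 * κ p ^ 2 * pderivFst κ p / 2 := by
      have hpow : HasDerivAt (fun x => κ (x, p.2) ^ 3 / 2)
          ((↑3 * κ (p.1, p.2) ^ (3 - 1) * pderivFst κ p) / 2) p.1 := (hκx.pow 3).div_const 2
      have h' := hκssx.add hpow
      have : pderivFst lam p
          = pderivFst (pderivFst (pderivFst κ)) p
            + (↑3 * κ (p.1, p.2) ^ (3 - 1) * pderivFst κ p) / 2 := by
        unfold pderivFst
        exact h'.deriv
      rw [this]
    rw [hlamval] at h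
    linear_combination h
  · exact absurd h hFJne
end

section
/- Let γ : ℝ × ℝ → ℂ and φ : ℝ × ℝ → ℝ be smooth functions satisfying ∂_s γ = exp(i·φ) everywhere. Define κ := ∂_s φ, and suppose γ satisfies the Goldstein–Petrich flow ∂_t γ = −(∂_s κ)·i·exp(i·φ) − (κ²/2)·exp(i·φ). Then κ satisfies the mKdV equation ∂_t κ + ∂_s³ κ + (3/2)·κ²·∂_s κ = 0. -/
section helpers
variable {E : Type*} [NormedAddCommGroup E] [NormedSpace ℝ E] {f : ℝ × ℝ → E}

lemma hasDerivAt_sliceFst (hf : ContDiff ℝ (⊤ : ℕ∞) f) (p : ℝ × ℝ) :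
    HasDerivAt (fun x => f (x, p.2)) (pderivFst f p) p.1 := by
  have h : ContDiff ℝ (⊤ : ℕ∞) (fun x : ℝ => f (x, p.2)) :=
    hf.comp (contDiff_id.prodMk contDiff_const)
  exact (h.differentiable (by simp) p.1).hasDerivAt

lemma hasDerivAt_sliceSnd (hf : ContDiff ℝ (⊤ : ℕ∞) f) (p : ℝ × ℝ) :
    HasDerivAt (fun y => f (p.1, y)) (pderivSnd f p) p.2 := by
  have h : ContDiff ℝ (⊤ : ℕ∞) (fun y : ℝ => f (p.1, y)) :=
    hf.comp (contDiff_const.prodMk contDiff_id)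
  exact (h.differentiable (by simp) p.2).hasDerivAt

lemma pderivFst_eq_fderiv (hf : ContDiff ℝ (⊤ : ℕ∞) f) (p : ℝ × ℝ) :
    pderivFst f p = fderiv ℝ f p ((1 : ℝ), (0 : ℝ)) := by
  have h1 : HasDerivAt (fun x : ℝ => (x, p.2)) ((1 : ℝ), (0 : ℝ)) p.1 :=
    (hasDerivAt_id _).prodMk (hasDerivAt_const _ _)
  have h2 : HasFDerivAt f (fderiv ℝ f (p.1, p.2)) (p.1, p.2) :=
    (hf.differentiable (by simp) (p.1, p.2)).hasFDerivAt
  have := h2.comp_hasDerivAt p.1 h1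
  simpa [pderivFst, Function.comp_def] using this.deriv

lemma pderivSnd_eq_fderiv (hf : ContDiff ℝ (⊤ : ℕ∞) f) (p : ℝ × ℝ) :
    pderivSnd f p = fderiv ℝ f p ((0 : ℝ), (1 : ℝ)) := by
  have h1 : HasDerivAt (fun y : ℝ => (p.1, y)) ((0 : ℝ), (1 : ℝ)) p.2 :=
    (hasDerivAt_const _ _).prodMk (hasDerivAt_id _)
  have h2 : HasFDerivAt f (fderiv ℝ f (p.1, p.2)) (p.1, p.2) :=
    (hf.differentiable (by simp) (p.1, p.2)).hasFDerivAt
  have := h2.comp_hasDerivAt p.2 h1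
  simpa [pderivSnd, Function.comp_def] using this.deriv

lemma contDiff_pderivFst (hf : ContDiff ℝ (⊤ : ℕ∞) f) : ContDiff ℝ (⊤ : ℕ∞) (pderivFst f) := by
  have : pderivFst f = fun p => fderiv ℝ f p ((1 : ℝ), (0 : ℝ)) :=
    funext (pderivFst_eq_fderiv hf)
  rw [this]
  exact (hf.fderiv_right (by simp)).clm_apply contDiff_const

lemma contDiff_pderivSnd (hf : ContDiff ℝ (⊤ : ℕ∞) f) : ContDiff ℝ (⊤ : ℕ∞) (pderivSnd f) := by
  have : pderivSnd f = fun p => fderiv ℝ f p ((0 : ℝ), (1 : ℝ)) :=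
    funext (pderivSnd_eq_fderiv hf)
  rw [this]
  exact (hf.fderiv_right (by simp)).clm_apply contDiff_const

lemma clairaut (hf : ContDiff ℝ (⊤ : ℕ∞) f) (p : ℝ × ℝ) :
    pderivSnd (pderivFst f) p = pderivFst (pderivSnd f) p := by
  have hd : Differentiable ℝ f := hf.differentiable (by simp)
  have hf' : ContDiff ℝ (⊤ : ℕ∞) (fderiv ℝ f) := hf.fderiv_right (by simp)
  have hd' : Differentiable ℝ (fderiv ℝ f) := hf'.differentiable (by simp)
  have hsymm := second_derivative_symmetric (f := f) (f' := fderiv ℝ f)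
    (f'' := fderiv ℝ (fderiv ℝ f) p) (fun y => (hd y).hasFDerivAt) ((hd' p).hasFDerivAt)
    ((1 : ℝ), (0 : ℝ)) ((0 : ℝ), (1 : ℝ))
  have e1 : pderivSnd (pderivFst f) p
      = fderiv ℝ (fderiv ℝ f) p ((0 : ℝ), (1 : ℝ)) ((1 : ℝ), (0 : ℝ)) := by
    rw [pderivSnd_eq_fderiv (contDiff_pderivFst hf) p]
    have : pderivFst f = fun q => fderiv ℝ f q ((1 : ℝ), (0 : ℝ)) :=
      funext (pderivFst_eq_fderiv hf)
    rw [this, fderiv_clm_apply (hd' p) (differentiableAt_const _)]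
    simp
  have e2 : pderivFst (pderivSnd f) p
      = fderiv ℝ (fderiv ℝ f) p ((1 : ℝ), (0 : ℝ)) ((0 : ℝ), (1 : ℝ)) := by
    rw [pderivFst_eq_fderiv (contDiff_pderivSnd hf) p]
    have : pderivSnd f = fun q => fderiv ℝ f q ((0 : ℝ), (1 : ℝ)) :=
      funext (pderivSnd_eq_fderiv hf)
    rw [this, fderiv_clm_apply (hd' p) (differentiableAt_const _)]
    simp
  rw [e1, e2, hsymm]

end helpers
/-- under the Goldstein–Petrich flow
`∂_t γ = -κ_s N - (κ²/2) T` (with `T = ∂_s γ = exp(iφ)`, `N = i exp(iφ)`,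
`κ = ∂_s φ`) the signed curvature evolves by the mKdV equation
`κ_t + κ_sss + (3/2) κ² κ_s = 0`. -/
theorem goldstein_petrich_flow_mkdv (γ : ℝ × ℝ → ℂ) (φ : ℝ × ℝ → ℝ)
    (hγ : ContDiff ℝ (⊤ : ℕ∞) γ) (hφ : ContDiff ℝ (⊤ : ℕ∞) φ)
    (htangent : ∀ p : ℝ × ℝ, pderivFst γ p = Complex.exp ((φ p : ℂ) * Complex.I))
    (κ : ℝ × ℝ → ℝ) (hκ : κ = pderivFst φ)
    (hflow : ∀ p : ℝ × ℝ,
      pderivSnd γ p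
        = -(Complex.ofReal (pderivFst κ p)) * Complex.I * Complex.exp ((φ p : ℂ) * Complex.I)
          - ((Complex.ofReal (κ p)) ^ 2 / 2) * Complex.exp ((φ p : ℂ) * Complex.I)) :
    ∀ p : ℝ × ℝ,
      pderivSnd κ p + pderivFst (pderivFst (pderivFst κ)) p
        + 3 / 2 * κ p ^ 2 * pderivFst κ p = 0 := by
  have hκC : ContDiff ℝ (⊤ : ℕ∞) κ := hκ ▸ contDiff_pderivFst hφ
  have hκsC : ContDiff ℝ (⊤ : ℕ∞) (pderivFst κ) := contDiff_pderivFst hκC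
  have hκssC : ContDiff ℝ (⊤ : ℕ∞) (pderivFst (pderivFst κ)) := contDiff_pderivFst hκsC
  have key : ∀ p : ℝ × ℝ,
      pderivSnd φ p = -(pderivFst (pderivFst κ) p) - (κ p) ^ 3 / 2 := by
    intro p
    set E : ℂ := Complex.exp ((φ p : ℂ) * Complex.I) with hE
    have hE0 : E ≠ 0 := Complex.exp_ne_zero _
    set a : ℂ := Complex.ofReal (κ p) with ha
    set b : ℂ := Complex.ofReal (pderivFst κ p) with hb
    set c : ℂ := Complex.ofReal (pderivFst (pderivFst κ) p) with hc
    -- A = ∂t ∂s γ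
    have hA : HasDerivAt (fun y => Complex.exp ((φ (p.1, y) : ℂ) * Complex.I))
        (E * (Complex.ofReal (pderivSnd φ p) * Complex.I)) p.2 :=
      (((hasDerivAt_sliceSnd hφ p).ofReal_comp).mul_const Complex.I).cexp
    have hA' : pderivSnd (pderivFst γ) p
        = E * (Complex.ofReal (pderivSnd φ p) * Complex.I) := by
      have hfun : pderivFst γ = fun q => Complex.exp ((φ q : ℂ) * Complex.I) :=
        funext htangent
      rw [hfun]
      simp only [pderivSnd]
      exact hA.deriv
    -- B = ∂s ∂t γ
    have hφ1 : HasDerivAt (fun x => φ (x, p.2)) (κ p) p.1 := by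
      rw [hκ]; exact hasDerivAt_sliceFst hφ p
    have hE1 : HasDerivAt (fun x => Complex.exp ((φ (x, p.2) : ℂ) * Complex.I))
        (E * (a * Complex.I)) p.1 :=
      ((hφ1.ofReal_comp).mul_const Complex.I).cexp
    have h1 := (((hasDerivAt_sliceFst hκsC p).ofReal_comp.neg).mul_const Complex.I).mul hE1
    have hκof : HasDerivAt (fun x => Complex.ofReal (κ (x, p.2))) b p.1 :=
      (hasDerivAt_sliceFst hκC p).ofReal_comp
    have h2 := ((hκof.mul hκof).div_const 2).mul hE1
    have hB := h1.sub h2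
    have hB' : pderivFst (pderivSnd γ) p
        = -c * Complex.I * E + -b * Complex.I * (E * (a * Complex.I))
          - ((b * a + a * b) / 2 * E + a * a / 2 * (E * (a * Complex.I))) := by
      have hfun : pderivSnd γ = fun q =>
          -(Complex.ofReal (pderivFst κ q)) * Complex.I * Complex.exp ((φ q : ℂ) * Complex.I)
            - ((Complex.ofReal (κ q)) ^ 2 / 2) * Complex.exp ((φ q : ℂ) * Complex.I) :=
        funext hflow
      rw [hfun]
      simp only [pderivFst]
      have hB2 : HasDerivAt
          (fun x =>
            -(Complex.ofReal (pderivFst κ (x, p.2))) * Complex.I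
                * Complex.exp ((φ (x, p.2) : ℂ) * Complex.I)
              - ((Complex.ofReal (κ (x, p.2))) ^ 2 / 2)
                * Complex.exp ((φ (x, p.2) : ℂ) * Complex.I))
          (-c * Complex.I * E + -b * Complex.I * (E * (a * Complex.I))
            - ((b * a + a * b) / 2 * E + a * a / 2 * (E * (a * Complex.I)))) p.1 := by
        have heq : (fun x =>
            -(Complex.ofReal (pderivFst κ (x, p.2))) * Complex.I
                * Complex.exp ((φ (x, p.2) : ℂ) * Complex.I)
              - ((Complex.ofReal (κ (x, p.2))) ^ 2 / 2)
                * Complex.exp ((φ (x, p.2) : ℂ) * Complex.I))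
            = (fun x =>
            -(Complex.ofReal (pderivFst κ (x, p.2))) * Complex.I
                * Complex.exp ((φ (x, p.2) : ℂ) * Complex.I)
              - (Complex.ofReal (κ (x, p.2)) * Complex.ofReal (κ (x, p.2)) / 2)
                * Complex.exp ((φ (x, p.2) : ℂ) * Complex.I)) := by
          funext x; ring
        rw [heq]
        exact hB
      exact hB2.deriv
    have hAB : E * (Complex.ofReal (pderivSnd φ p) * Complex.I)
        = -c * Complex.I * E + -b * Complex.I * (E * (a * Complex.I))
          - ((b * a + a * b) / 2 * E + a * a / 2 * (E * (a * Complex.I))) := by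
      rw [← hA', ← hB']
      exact clairaut hγ p
    have h4 : E * (Complex.ofReal (pderivSnd φ p) * Complex.I)
        = E * ((-c - a ^ 3 / 2) * Complex.I) := by
      linear_combination hAB - E * a * b * Complex.I_sq
    have h5 := mul_left_cancel₀ hE0 h4
    have h6 := mul_right_cancel₀ Complex.I_ne_zero h5
    rw [hc, ha] at h6
    exact_mod_cast h6
  intro p
  have hκt : pderivSnd κ p = pderivFst (pderivSnd φ) p := by
    rw [hκ]; exact clairaut hφ p
  have hfun : pderivSnd φ = fun q => -(pderivFst (pderivFst κ) q) - (κ q) ^ 3 / 2 :=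
    funext key
  have hD : HasDerivAt
      (fun x => -(pderivFst (pderivFst κ) (x, p.2)) - (κ (x, p.2)) ^ 3 / 2)
      (-(pderivFst (pderivFst (pderivFst κ)) p)
        - (3 : ℝ) * κ p ^ (3 - 1) * pderivFst κ p / 2) p.1 :=
    (hasDerivAt_sliceFst hκssC p).neg.sub
      (((hasDerivAt_sliceFst hκC p).pow 3).div_const 2)
  have hval : pderivFst (pderivSnd φ) p
      = -(pderivFst (pderivFst (pderivFst κ)) p)
          - (3 : ℝ) * κ p ^ (3 - 1) * pderivFst κ p / 2 := by
    rw [hfun]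
    simp only [pderivFst]
    exact hD.deriv
  rw [hκt, hval]
  norm_num
  ring
end
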